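/- arXiv:2512.21242 — 4 statements merged into one kernel-verified Lean document; each statement's English description precedes it below -/
import Mathlib

section
/- Let G be a finite group with subgroups H ⊴ A ⊴ G (H normal in A and A normal in G), and let s be an integer with 0 ≤ s ≤ |A:H|. Then A is a (0,s)-regular set of the pair (G,H) if and only if both of the following hold: (1) |H|/|H ∩ H^t| divides s for every t ∈ G∖A; (2) for every x ∈ G∖A such that x² ∈ A and s·|H ∩ H^x|/|H| is odd, there exists a ∈ A such that HxaH = H(xa)⁻¹H. -/
open scoped Pointwise

/-- A subset `C` of the vertices of a graph `Γ` is an `(r,s)`-regular set if every vertex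
in `C` has exactly `r` neighbours in `C` and every vertex outside `C` has exactly `s`
neighbours in `C`. -/
def IsRegularVertexSet {V : Type*} (Γ : SimpleGraph V) (C : Set V) (r s : ℕ) : Prop :=
  (∀ v ∈ C, {w | w ∈ C ∧ Γ.Adj v w}.ncard = r) ∧
  ∀ v ∉ C, {w | w ∈ C ∧ Γ.Adj v w}.ncard = s

/-- The coset graph `Cos(G,H,U)` on the left cosets of `H` in `G`:
`g₁H` and `g₂H` are adjacent iff `g₁⁻¹ g₂ ∈ U`. -/
def cosetGraph {G : Type*} [Group G] (H : Subgroup G) (U : Set G) : SimpleGraph (G ⧸ H) :=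
  SimpleGraph.fromRel fun C D =>
    ∃ g₁ g₂ : G, QuotientGroup.mk g₁ = C ∧ QuotientGroup.mk g₂ = D ∧ g₁⁻¹ * g₂ ∈ U

/-- `U` is a valid connection set for a coset graph `Cos(G,H,U)`:
inverse-closed, disjoint from `H`, and a union of double cosets of `H` (`HUH = U`). -/
def IsCosetGraphConnectionSet {G : Type*} [Group G] (H : Subgroup G) (U : Set G) : Prop :=
  U⁻¹ = U ∧ (H : Set G) ∩ U = ∅ ∧ (H : Set G) * U * (H : Set G) = U

/-- `A` is an `(r,s)`-regular set of the pair `(G,H)`: there is a coset graph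
`Cos(G,H,U)` in which the set of left cosets of `H` in `A` is an `(r,s)`-regular set. -/
def IsRegularSetOfPair {G : Type*} [Group G] (H A : Subgroup G) (r s : ℕ) : Prop :=
  ∃ U : Set G, IsCosetGraphConnectionSet H U ∧
    IsRegularVertexSet (cosetGraph H U)
      {C : G ⧸ H | ∃ a ∈ A, QuotientGroup.mk a = C} r s

/-- `A` is a perfect code of the pair `(G,H)` iff it is a `(0,1)`-regular set of `(G,H)`. -/
def IsPerfectCodeOfPair {G : Type*} [Group G] (H A : Subgroup G) : Prop :=
  IsRegularSetOfPair H A 0 1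

/-- A subgroup `A` is an `(r,s)`-regular set of `G` iff it is an `(r,s)`-regular set of
the pair `(G,1)`, i.e. an `(r,s)`-regular set in some Cayley graph of `G`. -/
def IsRegularSetOfGroup {G : Type*} [Group G] (A : Subgroup G) (r s : ℕ) : Prop :=
  IsRegularSetOfPair ⊥ A r s

/-- A subgroup `A` is a perfect code of `G` iff it is a `(0,1)`-regular set of `G`. -/
def IsPerfectCodeOfGroup {G : Type*} [Group G] (A : Subgroup G) : Prop :=
  IsRegularSetOfGroup A 0 1

/-- The conjugate subgroup `K^t = t⁻¹ K t`. -/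
def conjSub {G : Type*} [Group G] (K : Subgroup G) (t : G) : Subgroup G :=
  K.map (MulAut.conj t⁻¹).toMonoidHom

/-!
For `x ∉ A` write `L = H^x H`. Since `A` normalises `H`, `H^g = H^x` for every `g ∈ xA`, so
`HgH = gL`: the double cosets of `H` inside `xA` are exactly the left cosets of `L`, and
`|L| = |H| · |H : H ∩ H^x|`. For a connection set `U`, the set `A` is `(0,s)`-regular iff `U`
misses `A` and `|U ∩ xA| = s|H|` for every `x ∉ A`, i.e. `U ∩ xA` is a union of
`s / |H : H ∩ H^x|` double cosets; this gives the divisibility condition. When `x² ∈ A`,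
inversion permutes the double cosets in `xA`, and those in `U` form an inverse-closed family,
which can have odd size only if it contains a self-inverse double coset. Conversely one chooses
such families coset by coset, and makes the choices over `xA` and `x⁻¹A` inverse to each other.
-/

namespace Set

variable {α : Type*} {s : Set α} {φ : α → α}

theorem exists_fixed_of_odd_ncard [Finite α] (hφ : MapsTo φ s s) (hinv : ∀ a ∈ s, φ (φ a) = a)
    (hs : Odd s.ncard) : ∃ a ∈ s, φ a = a := by
  classical
  by_contra! hfix
  have hsum : ∑ _a ∈ s.toFinite.toFinset, (1 : ZMod 2) = 0 :=
    Finset.sum_involution (fun a _ => φ a) (fun _ _ => by decide)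
      (fun a ha _ => hfix a (by simpa using ha))
      (fun a ha => by simpa using hφ (by simpa using ha)) (fun a ha => hinv a (by simpa using ha))
  rw [Finset.sum_const, nsmul_one, ← ncard_eq_toFinset_card, ZMod.natCast_eq_zero_iff_even]
    at hsum
  exact Nat.not_even_iff_odd.mpr hs hsum

theorem MapsTo.sdiff_pair (hφ : MapsTo φ s s) (hinv : ∀ a ∈ s, φ (φ a) = a) {a : α}
    (ha : a ∈ s) : MapsTo φ (s \ {a, φ a}) (s \ {a, φ a}) := by
  rintro b ⟨hb, hbp⟩
  refine ⟨hφ hb, fun h => hbp ?_⟩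
  rcases h with h | h
  · exact Or.inr (by rw [mem_singleton_iff, ← h, hinv b hb])
  · exact Or.inl (by rw [← hinv b hb, h, hinv a ha])

theorem exists_mapsTo_subset_ncard_eq [Finite α] (m : ℕ) (hφ : MapsTo φ s s)
    (hinv : ∀ a ∈ s, φ (φ a) = a) (hm : m ≤ s.ncard) (hodd : Odd m → ∃ a ∈ s, φ a = a) :
    ∃ t ⊆ s, t.ncard = m ∧ MapsTo φ t t := by
  induction m using Nat.strong_induction_on generalizing s with
  | _ m ih =>
  by_cases hall : ∀ a ∈ s, φ a = a
  · obtain ⟨t, hts, rfl⟩ := exists_subset_card_eq hm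
    exact ⟨t, hts, rfl, fun a ha => (hall a (hts ha)).symm ▸ ha⟩
  obtain _ | _ | k := m
  · exact ⟨∅, empty_subset _, ncard_empty _, mapsTo_empty _ _⟩
  · obtain ⟨a, ha, hfix⟩ := hodd odd_one
    exact ⟨{a}, singleton_subset_iff.mpr ha, ncard_singleton a,
      fun b hb => by rw [mem_singleton_iff.mp hb, hfix]; exact rfl⟩
  push Not at hall
  obtain ⟨a, ha, hfa⟩ := hall
  have hpair : ({a, φ a} : Set α) ⊆ s := insert_subset ha (singleton_subset_iff.mpr (hφ ha))
  have hpair_card : ({a, φ a} : Set α).ncard = 2 := ncard_pair hfa.symm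
  obtain ⟨t, hts, htcard, htφ⟩ := ih k (by omega) (hφ.sdiff_pair hinv ha)
    (fun b hb => hinv b hb.1) (by rw [ncard_sdiff hpair, hpair_card]; omega)
    (fun hk => by
      obtain ⟨b, hb, hfb⟩ := hodd (by simpa [Nat.odd_add] using hk)
      refine ⟨b, ⟨hb, ?_⟩, hfb⟩
      rintro (rfl | h)
      · exact hfa hfb
      · rw [mem_singleton_iff.mp h, hinv a ha] at hfb
        exact hfa hfb.symm)
  refine ⟨t ∪ {a, φ a}, union_subset (hts.trans sdiff_subset) hpair, ?_, ?_⟩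
  · rw [ncard_union_eq (disjoint_of_subset_left hts disjoint_sdiff_left), htcard, hpair_card]
  · rintro b (hb | rfl | hb)
    · exact Or.inl (htφ hb)
    · exact Or.inr (Or.inr (mem_singleton _))
    · rw [mem_singleton_iff.mp hb]
      exact Or.inr (Or.inl (hinv a ha))

end Set

theorem Nat.div_mul_mul_div_cancel {h c : ℕ} (hc : c ∣ h) (hh : 0 < h) (n : ℕ) :
    h / c * n * c / h = n := by
  rw [mul_right_comm, Nat.div_mul_cancel hc, Nat.mul_div_cancel_left n hh]

theorem exists_inv_compatible_family {Q α : Type*} [InvolutiveInv Q] [InvolutiveInv α]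
    (P : Q → α → Prop) (hP : ∀ q v, P q v → P q⁻¹ v⁻¹)
    (hex : ∀ q, ∃ v, P q v ∧ (q⁻¹ = q → v⁻¹ = v)) :
    ∃ W : Q → α, ∀ q, P q (W q) ∧ W q⁻¹ = (W q)⁻¹ := by
  classical
  choose V hPV hV using hex
  let : LinearOrder Q := IsWellOrder.linearOrder WellOrderingRel
  refine ⟨fun q => if q ≤ q⁻¹ then V q else (V q⁻¹)⁻¹, fun q => ⟨?_, ?_⟩⟩
  · dsimp only
    split_ifs
    · exact hPV q
    · simpa using hP _ _ (hPV q⁻¹)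
  · rcases lt_trichotomy q q⁻¹ with hlt | heq | hgt
    · simp [hlt.le, hlt.not_ge]
    · simp [← heq, hV q heq.symm]
    · simp [hgt.le, hgt.not_ge]

theorem Subgroup.card_sup_mul_card_inf_of_le_normalizer {G : Type*} [Group G] {H K : Subgroup G}
    (hLE : H ≤ Subgroup.normalizer (K : Set G)) :
    Nat.card ↥(H ⊔ K) * Nat.card ↥(H ⊓ K) = Nat.card H * Nat.card K := by
  have hsup := Subgroup.relIndex_mul_relIndex ⊥ K (H ⊔ K) bot_le le_sup_right
  have hH := Subgroup.relIndex_mul_relIndex ⊥ (H ⊓ K) H bot_le inf_le_left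
  have := Subgroup.normal_subgroupOf_of_le_normalizer hLE
  have := Subgroup.normal_subgroupOf_sup_of_le_normalizer hLE
  have hiso : K.relIndex (H ⊔ K) = K.relIndex H :=
    Nat.card_congr (QuotientGroup.quotientInfEquivProdNormalizerQuotient H K hLE).toEquiv.symm
  rw [Subgroup.relIndex_bot_left, Subgroup.relIndex_bot_left] at hsup hH
  rw [Subgroup.inf_relIndex_left] at hH
  rw [← hsup, ← hH, hiso]
  ring

section ConjSub

variable {G : Type*} [Group G] {H : Subgroup G}

theorem mem_conjSub_iff {t g : G} : g ∈ conjSub H t ↔ t * g * t⁻¹ ∈ H := by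
  simp only [conjSub, Subgroup.mem_map, MulEquiv.coe_toMonoidHom, MulAut.conj_apply, inv_inv]
  refine ⟨?_, fun hg => ⟨t * g * t⁻¹, hg, by group⟩⟩
  rintro ⟨h, hh, rfl⟩
  simpa [mul_assoc] using hh

theorem card_conjSub (H : Subgroup G) (t : G) : Nat.card (conjSub H t) = Nat.card H :=
  (Nat.card_congr ((MulAut.conj t⁻¹).subgroupMap H).toEquiv).symm

theorem conjSub_mul_of_mem_normalizer {x b : G}
    (hb : x * b * x⁻¹ ∈ Subgroup.normalizer (H : Set G)) : conjSub H (x * b) = conjSub H x := by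
  ext g
  rw [mem_conjSub_iff, mem_conjSub_iff, Subgroup.mem_normalizer_iff.mp hb (x * g * x⁻¹)]
  group

theorem le_normalizer_conjSub {x : G}
    (hx : ∀ h ∈ H, x * h * x⁻¹ ∈ Subgroup.normalizer (H : Set G)) :
    H ≤ Subgroup.normalizer (conjSub H x : Set G) := fun h hh =>
  Subgroup.mem_normalizer_iff.mpr fun g => by
    rw [mem_conjSub_iff, mem_conjSub_iff,
      Subgroup.mem_normalizer_iff.mp (hx h hh) (x * g * x⁻¹)]
    group

theorem mem_normalizer_conjSub_sup {g : G} (hg : conjSub H g⁻¹ = conjSub H g) :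
    g ∈ Subgroup.normalizer ((conjSub H g ⊔ H : Subgroup G) : Set G) := by
  have key : ∀ y : G,
      conjSub H y ⊔ H ≤ (conjSub H y⁻¹ ⊔ H).comap (MulAut.conj y).toMonoidHom := fun y =>
    sup_le (fun k hk => Subgroup.mem_sup_right (by simpa [mem_conjSub_iff] using hk))
      (fun h hh => Subgroup.mem_sup_left (by simpa [mem_conjSub_iff, mul_assoc] using hh))
  refine Subgroup.mem_normalizer_iff.mpr fun l => ⟨fun hl => ?_, fun hl => ?_⟩
  · simpa [hg] using key g hl
  · have := key g⁻¹ (show g * l * g⁻¹ ∈ conjSub H g⁻¹ ⊔ H by rwa [hg])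
    simpa [mul_assoc, hg] using this

theorem mul_mul_eq_mul_conjSub {K : Subgroup G} {V : Set G}
    (hV : ∀ v ∈ V, conjSub H v = K) : (H : Set G) * V * H = V * (K * H) := by
  ext y
  simp only [Set.mem_mul]
  constructor
  · rintro ⟨_, ⟨h, hh, v, hv, rfl⟩, h', hh', rfl⟩
    refine ⟨v, hv, _, ⟨v⁻¹ * h * v, ?_, h', hh', rfl⟩, by group⟩
    rw [← hV v hv, SetLike.mem_coe, mem_conjSub_iff]
    simpa [mul_assoc] using hh
  · rintro ⟨v, hv, _, ⟨k, hk, h', hh', rfl⟩, rfl⟩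
    rw [← hV v hv, SetLike.mem_coe, mem_conjSub_iff] at hk
    exact ⟨_, ⟨v * k * v⁻¹, hk, v, hv, rfl⟩, h', hh', by group⟩

end ConjSub

namespace QuotientGroup

variable {G : Type*} [Group G] {L : Subgroup G} {X : Set G}

theorem ncard_eq_card_mul_ncard_image_mk (hXL : X * L ⊆ X) :
    X.ncard = Nat.card L * ((↑) '' X : Set (G ⧸ L)).ncard := by
  have hX : X * L = X := hXL.antisymm (Set.subset_mul_left X L.one_mem)
  rw [← Nat.card_coe_set_eq, ← Nat.card_coe_set_eq,
    ← Subgroup.card_mul_eq_card_subgroup_mul_card_quotient, hX]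

theorem mul_subset_inter_preimage_mk (hXL : X * L ⊆ X) (S : Set (G ⧸ L)) :
    (X ∩ (↑) ⁻¹' S) * L ⊆ X ∩ (↑) ⁻¹' S := by
  rintro _ ⟨v, ⟨hvX, hvS⟩, l, hl, rfl⟩
  exact ⟨hXL (Set.mul_mem_mul hvX hl), by simpa [mk_mul_of_mem v hl] using hvS⟩

theorem ncard_inter_preimage_mk (hXL : X * L ⊆ X) {S : Set (G ⧸ L)} (hS : S ⊆ (↑) '' X) :
    (X ∩ (↑) ⁻¹' S).ncard = Nat.card L * S.ncard := by
  rw [ncard_eq_card_mul_ncard_image_mk (mul_subset_inter_preimage_mk hXL S),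
    Set.image_inter_preimage, Set.inter_eq_right.mpr hS]

theorem exists_subset_ncard_eq (hXL : X * L ⊆ X) {m : ℕ}
    (hm : m ≤ ((↑) '' X : Set (G ⧸ L)).ncard) :
    ∃ V ⊆ X, V * L ⊆ V ∧ V.ncard = Nat.card L * m := by
  obtain ⟨S, hS, rfl⟩ := Set.exists_subset_card_eq hm
  exact ⟨_, Set.inter_subset_left, mul_subset_inter_preimage_mk hXL S,
    ncard_inter_preimage_mk hXL hS⟩

-- On the normaliser of `L`, inversion of left cosets `gL ↦ g⁻¹L` is well defined.
theorem mk_inv_out_mk {g : G} (hg : g ∈ Subgroup.normalizer (L : Set G)) :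
    (mk (mk g : G ⧸ L).out⁻¹ : G ⧸ L) = mk g⁻¹ := by
  have hout : g⁻¹ * (mk g : G ⧸ L).out ∈ L := QuotientGroup.eq.mp (out_eq' _).symm
  refine QuotientGroup.eq.mpr ?_
  have := (Subgroup.mem_normalizer_iff.mp hg _).mp hout
  simpa [mul_assoc] using this

theorem mapsTo_mk_out_inv (hXN : X ⊆ Subgroup.normalizer (L : Set G))
    (hXinv : ∀ g ∈ X, g⁻¹ ∈ X) :
    Set.MapsTo (fun p : G ⧸ L => (mk p.out⁻¹ : G ⧸ L)) ((↑) '' X) ((↑) '' X) := by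
  rintro _ ⟨g, hg, rfl⟩
  exact ⟨g⁻¹, hXinv g hg, (mk_inv_out_mk (hXN hg)).symm⟩

theorem mk_out_inv_mk_out_inv (hXN : X ⊆ Subgroup.normalizer (L : Set G)) :
    ∀ p ∈ ((↑) '' X : Set (G ⧸ L)), (mk (mk p.out⁻¹ : G ⧸ L).out⁻¹ : G ⧸ L) = p := by
  rintro _ ⟨g, hg, rfl⟩
  rw [mk_inv_out_mk (hXN hg), mk_inv_out_mk (Subgroup.inv_mem _ (hXN hg)), inv_inv]

variable [Finite G]

theorem exists_mk_inv_eq_of_odd_ncard (hXN : X ⊆ Subgroup.normalizer (L : Set G))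
    (hXinv : ∀ g ∈ X, g⁻¹ ∈ X) (hodd : Odd ((↑) '' X : Set (G ⧸ L)).ncard) :
    ∃ g ∈ X, (mk g⁻¹ : G ⧸ L) = mk g := by
  obtain ⟨_, ⟨g, hg, rfl⟩, hfix⟩ := Set.exists_fixed_of_odd_ncard
    (mapsTo_mk_out_inv hXN hXinv) (mk_out_inv_mk_out_inv hXN) hodd
  exact ⟨g, hg, (mk_inv_out_mk (hXN hg)).symm.trans hfix⟩

theorem exists_inv_closed_subset_ncard_eq (hXL : X * L ⊆ X)
    (hXN : X ⊆ Subgroup.normalizer (L : Set G)) (hXinv : ∀ g ∈ X, g⁻¹ ∈ X) {m : ℕ}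
    (hm : m ≤ ((↑) '' X : Set (G ⧸ L)).ncard)
    (hodd : Odd m → ∃ g ∈ X, (mk g⁻¹ : G ⧸ L) = mk g) :
    ∃ V ⊆ X, V * L ⊆ V ∧ (∀ g ∈ V, g⁻¹ ∈ V) ∧ V.ncard = Nat.card L * m := by
  obtain ⟨S, hS, rfl, hSinv⟩ := Set.exists_mapsTo_subset_ncard_eq m
    (mapsTo_mk_out_inv hXN hXinv) (mk_out_inv_mk_out_inv hXN) hm
    (fun h => by
      obtain ⟨g, hg, hfix⟩ := hodd h
      exact ⟨mk g, ⟨g, hg, rfl⟩, (mk_inv_out_mk (hXN hg)).trans hfix⟩)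
  refine ⟨_, Set.inter_subset_left, mul_subset_inter_preimage_mk hXL S, ?_,
    ncard_inter_preimage_mk hXL hS⟩
  rintro g ⟨hgX, hgS⟩
  refine ⟨hXinv g hgX, ?_⟩
  have := hSinv hgS
  rwa [Set.mem_preimage, ← mk_inv_out_mk (hXN hgX)]

end QuotientGroup

theorem mem_leftCoset_iff_mk_eq {G : Type*} [Group G] {A : Subgroup G} {x g : G} :
    g ∈ x • (A : Set G) ↔ (g : G ⧸ A) = x := by
  rw [mem_leftCoset_iff, SetLike.mem_coe, ← QuotientGroup.eq, eq_comm]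

section NormalTower

variable {G : Type*} [Group G] {H A : Subgroup G} [hA : A.Normal] {x g : G}

theorem conjSub_le_of_le (hHA : H ≤ A) (x : G) : conjSub H x ≤ A := fun g hg => by
  simpa [mul_assoc] using hA.conj_mem _ (hHA (mem_conjSub_iff.mp hg)) x⁻¹

theorem inv_mem_leftCoset (hx2 : x ^ 2 ∈ A) (hg : g ∈ x • (A : Set G)) :
    g⁻¹ ∈ x • (A : Set G) := by
  obtain ⟨a, ha, rfl⟩ := hg
  refine ⟨x⁻¹ * a⁻¹ * x * (x ^ 2)⁻¹,
    A.mul_mem (hA.conj_mem' _ (A.inv_mem ha) x) (A.inv_mem hx2), ?_⟩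
  simp only [smul_eq_mul]
  group

theorem leftCoset_mul_sup_subset (hHA : H ≤ A) (x : G) :
    x • (A : Set G) * ↑(conjSub H x ⊔ H) ⊆ x • (A : Set G) := by
  rintro _ ⟨_, ⟨a, ha, rfl⟩, l, hl, rfl⟩
  exact ⟨a * l, A.mul_mem ha (sup_le (conjSub_le_of_le hHA x) hHA hl), by simp [mul_assoc]⟩

variable (hHA : H ≤ A) (hAN : A ≤ Subgroup.normalizer (H : Set G))
include hAN

theorem conjSub_eq_of_mem_leftCoset (hg : g ∈ x • (A : Set G)) : conjSub H g = conjSub H x := by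
  obtain ⟨b, hb, rfl⟩ := hg
  exact conjSub_mul_of_mem_normalizer (hAN (hA.conj_mem b hb x))

theorem leftCoset_subset_normalizer_sup (hx2 : x ^ 2 ∈ A) :
    x • (A : Set G) ⊆ Subgroup.normalizer (↑(conjSub H x ⊔ H) : Set G) := by
  intro g hg
  have hgx := conjSub_eq_of_mem_leftCoset hAN hg
  rw [← hgx]
  exact mem_normalizer_conjSub_sup
    ((conjSub_eq_of_mem_leftCoset hAN (inv_mem_leftCoset hx2 hg)).trans hgx.symm)

include hHA

theorem le_normalizer_conjSub_of_le (x : G) : H ≤ Subgroup.normalizer (conjSub H x : Set G) :=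
  le_normalizer_conjSub fun h hh => hAN (hA.conj_mem h (hHA hh) x)

theorem mul_mul_eq_mul_sup {V : Set G} (hV : V ⊆ x • (A : Set G)) :
    (H : Set G) * V * H = V * ↑(conjSub H x ⊔ H) := by
  rw [mul_mul_eq_mul_conjSub fun v hv => conjSub_eq_of_mem_leftCoset hAN (hV hv),
    Subgroup.coe_mul_of_right_le_normalizer_left _ _ (le_normalizer_conjSub_of_le hHA hAN x)]

theorem mul_singleton_mul_eq_smul (hg : g ∈ x • (A : Set G)) :
    (H : Set G) * {g} * H = g • ↑(conjSub H x ⊔ H) := by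
  rw [mul_mul_eq_mul_sup hHA hAN (Set.singleton_subset_iff.mpr hg), Set.singleton_mul]
  rfl

theorem mul_singleton_mul_eq_inv_iff (hx2 : x ^ 2 ∈ A) (hg : g ∈ x • (A : Set G)) :
    (H : Set G) * {g} * H = H * {g⁻¹} * H ↔
      (QuotientGroup.mk g⁻¹ : G ⧸ (conjSub H x ⊔ H)) = QuotientGroup.mk g := by
  rw [mul_singleton_mul_eq_smul hHA hAN hg,
    mul_singleton_mul_eq_smul hHA hAN (inv_mem_leftCoset hx2 hg), leftCoset_eq_iff, eq_comm,
    QuotientGroup.eq]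

theorem card_conjSub_sup [Finite G] (x : G) :
    Nat.card ↥(conjSub H x ⊔ H) = Nat.card H * (Nat.card H / Nat.card ↥(H ⊓ conjSub H x)) := by
  have hprod :=
    Subgroup.card_sup_mul_card_inf_of_le_normalizer (le_normalizer_conjSub_of_le hHA hAN x)
  rw [card_conjSub, sup_comm] at hprod
  rw [← Nat.mul_div_assoc _ (Subgroup.card_dvd_of_le inf_le_left), ← hprod,
    Nat.mul_div_cancel _ Nat.card_pos]

theorem div_card_inf_mul_ncard_image_leftCoset [Finite G] (x : G) :
    Nat.card H / Nat.card ↥(H ⊓ conjSub H x) *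
      ((↑) '' (x • (A : Set G)) : Set (G ⧸ (conjSub H x ⊔ H))).ncard = H.relIndex A := by
  have hcard := QuotientGroup.ncard_eq_card_mul_ncard_image_mk (leftCoset_mul_sup_subset hHA x)
  rw [Set.ncard_smul_set, ← Nat.card_coe_set_eq, SetLike.coe_sort_coe,
    ← Subgroup.relIndex_bot_left, ← Subgroup.relIndex_mul_relIndex ⊥ H A bot_le hHA,
    Subgroup.relIndex_bot_left, card_conjSub_sup hHA hAN, mul_assoc] at hcard
  exact (Nat.eq_of_mul_eq_mul_left Nat.card_pos hcard).symm

end NormalTower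

section CosetGraph

variable {G : Type*} [Group G] {H A : Subgroup G} {U : Set G}

theorem IsCosetGraphConnectionSet.mul_mem_mul (hU : IsCosetGraphConnectionSet H U) {h u h' : G}
    (hh : h ∈ H) (hu : u ∈ U) (hh' : h' ∈ H) : h * u * h' ∈ U := by
  rw [← hU.2.2]
  exact Set.mul_mem_mul (Set.mul_mem_mul hh hu) hh'

theorem cosetGraph_adj_mk_iff (hU : IsCosetGraphConnectionSet H U) {g b : G} :
    (cosetGraph H U).Adj (g : G ⧸ H) (b : G ⧸ H) ↔ g⁻¹ * b ∈ U := by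
  have hrel : ∀ g b : G, (∃ g₁ g₂ : G, (g₁ : G ⧸ H) = g ∧ (g₂ : G ⧸ H) = b ∧ g₁⁻¹ * g₂ ∈ U) ↔
      g⁻¹ * b ∈ U := by
    refine fun g b => ⟨?_, fun hgb => ⟨g, b, rfl, rfl, hgb⟩⟩
    rintro ⟨g₁, g₂, h₁, h₂, hu⟩
    simpa [mul_assoc] using
      hU.mul_mem_mul (QuotientGroup.eq.mp h₁.symm) hu (QuotientGroup.eq.mp h₂)
  have hsymm : b⁻¹ * g ∈ U ↔ g⁻¹ * b ∈ U := by
    rw [← Set.inv_mem_inv, hU.1, mul_inv_rev, inv_inv]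
  rw [cosetGraph, SimpleGraph.fromRel_adj, hrel, hrel, hsymm, or_self, and_iff_right_iff_imp]
  intro hgb heq
  exact (Set.eq_empty_iff_forall_notMem.mp hU.2.1) _ ⟨QuotientGroup.eq.mp heq, hgb⟩

theorem ncard_neighbors_mul_card [Finite G] (hHA : H ≤ A) (hU : IsCosetGraphConnectionSet H U)
    (g : G) :
    {w | w ∈ {C : G ⧸ H | ∃ a ∈ A, QuotientGroup.mk a = C} ∧ (cosetGraph H U).Adj g w}.ncard *
      Nat.card H = (U ∩ g⁻¹ • (A : Set G)).ncard := by
  have himage : {w | w ∈ {C : G ⧸ H | ∃ a ∈ A, QuotientGroup.mk a = C} ∧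
      (cosetGraph H U).Adj g w} = (↑) '' ((A : Set G) ∩ g • U) := by
    ext w
    constructor
    · rintro ⟨⟨a, ha, rfl⟩, hadj⟩
      exact ⟨a, ⟨ha, Set.mem_smul_set_iff_inv_smul_mem.mpr ((cosetGraph_adj_mk_iff hU).mp hadj)⟩,
        rfl⟩
    · rintro ⟨a, ⟨ha, hau⟩, rfl⟩
      exact ⟨⟨a, ha, rfl⟩,
        (cosetGraph_adj_mk_iff hU).mpr (Set.mem_smul_set_iff_inv_smul_mem.mp hau)⟩
  have hclosed : ((A : Set G) ∩ g • U) * H ⊆ (A : Set G) ∩ g • U := by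
    rintro _ ⟨a, ⟨ha, hau⟩, h, hh, rfl⟩
    refine ⟨A.mul_mem ha (hHA hh), Set.mem_smul_set_iff_inv_smul_mem.mpr ?_⟩
    have := hU.mul_mem_mul H.one_mem (Set.mem_smul_set_iff_inv_smul_mem.mp hau) hh
    simpa [mul_assoc] using this
  rw [himage, mul_comm, ← QuotientGroup.ncard_eq_card_mul_ncard_image_mk hclosed,
    ← Set.ncard_smul_set g⁻¹, Set.smul_set_inter, inv_smul_smul, Set.inter_comm]

theorem isRegularVertexSet_zero_iff [Finite G] (hHA : H ≤ A) (hU : IsCosetGraphConnectionSet H U)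
    (s : ℕ) :
    IsRegularVertexSet (cosetGraph H U) {C : G ⧸ H | ∃ a ∈ A, QuotientGroup.mk a = C} 0 s ↔
      U ∩ A = ∅ ∧ ∀ x : G, x ∉ A → (U ∩ x • (A : Set G)).ncard = s * Nat.card H := by
  have hC : ∀ g : G, (g : G ⧸ H) ∈ {C : G ⧸ H | ∃ a ∈ A, QuotientGroup.mk a = C} ↔ g ∈ A :=
    fun g => ⟨fun ⟨a, ha, hag⟩ => by simpa using A.mul_mem ha (hHA (QuotientGroup.eq.mp hag)),
      fun hg => ⟨g, hg, rfl⟩⟩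
  have hcount : ∀ (g : G) (n : ℕ),
      {w | w ∈ {C : G ⧸ H | ∃ a ∈ A, QuotientGroup.mk a = C} ∧
        (cosetGraph H U).Adj g w}.ncard = n ↔ (U ∩ g⁻¹ • (A : Set G)).ncard = n * Nat.card H :=
    fun g n => by rw [← ncard_neighbors_mul_card hHA hU, Nat.mul_left_inj Nat.card_pos.ne']
  simp only [IsRegularVertexSet, QuotientGroup.forall_mk, hC, hcount, zero_mul]
  refine and_congr ⟨fun h => ?_, fun h g hg => ?_⟩ ⟨fun h x hx => ?_, fun h g hg => ?_⟩
  · rw [← Set.ncard_eq_zero]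
    simpa using h 1 A.one_mem
  · rwa [smul_coe_set (A.inv_mem hg), Set.ncard_eq_zero]
  · simpa using h x⁻¹ (by simpa using hx)
  · exact h g⁻¹ (by simpa using hg)

end CosetGraph

section Main

variable {G : Type*} [Group G] {H A : Subgroup G} [A.Normal] {U : Set G} {s : ℕ} {x : G}
  (hHA : H ≤ A) (hAN : A ≤ Subgroup.normalizer (H : Set G))
include hHA hAN

theorem inter_leftCoset_mul_sup_subset (hU : IsCosetGraphConnectionSet H U) (x : G) :
    (U ∩ x • (A : Set G)) * ↑(conjSub H x ⊔ H) ⊆ U ∩ x • (A : Set G) := by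
  rw [← mul_mul_eq_mul_sup hHA hAN Set.inter_subset_right]
  refine Set.subset_inter ?_ ?_
  · exact (Set.mul_subset_mul (Set.mul_subset_mul subset_rfl Set.inter_subset_left)
      subset_rfl).trans hU.2.2.subset
  · refine (Set.mul_subset_mul (Set.mul_subset_mul subset_rfl Set.inter_subset_right)
      subset_rfl).trans ?_
    rw [mul_mul_eq_mul_sup hHA hAN subset_rfl]
    exact leftCoset_mul_sup_subset hHA x

variable [Finite G]

theorem eq_div_card_inf_mul_ncard_image (hU : IsCosetGraphConnectionSet H U)
    (hcount : (U ∩ x • (A : Set G)).ncard = s * Nat.card H) :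
    s = Nat.card H / Nat.card ↥(H ⊓ conjSub H x) *
      ((↑) '' (U ∩ x • (A : Set G)) : Set (G ⧸ (conjSub H x ⊔ H))).ncard := by
  have h := QuotientGroup.ncard_eq_card_mul_ncard_image_mk
    (inter_leftCoset_mul_sup_subset hHA hAN hU x)
  rw [hcount, card_conjSub_sup hHA hAN, mul_assoc, mul_comm s] at h
  exact Nat.eq_of_mul_eq_mul_left Nat.card_pos h

theorem exists_mul_singleton_mul_eq_inv (hU : IsCosetGraphConnectionSet H U)
    (hcount : (U ∩ x • (A : Set G)).ncard = s * Nat.card H) (hx2 : x ^ 2 ∈ A)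
    (hodd : Odd (s * Nat.card ↥(H ⊓ conjSub H x) / Nat.card H)) :
    ∃ a ∈ A, (H : Set G) * {x * a} * H = H * {(x * a)⁻¹} * H := by
  rw [eq_div_card_inf_mul_ncard_image hHA hAN hU hcount,
    Nat.div_mul_mul_div_cancel (Subgroup.card_dvd_of_le inf_le_left) Nat.card_pos] at hodd
  have hinv : ∀ g ∈ U ∩ x • (A : Set G), g⁻¹ ∈ U ∩ x • (A : Set G) := fun g hg =>
    ⟨by rw [← hU.1]; exact Set.inv_mem_inv.mpr hg.1, inv_mem_leftCoset hx2 hg.2⟩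
  obtain ⟨g, ⟨-, a, ha, rfl⟩, hfix⟩ := QuotientGroup.exists_mk_inv_eq_of_odd_ncard
    (Set.inter_subset_right.trans (leftCoset_subset_normalizer_sup hAN hx2)) hinv hodd
  exact ⟨a, ha, (mul_singleton_mul_eq_inv_iff hHA hAN hx2 ⟨a, ha, rfl⟩).mpr hfix⟩

theorem exists_subset_leftCoset_ncard_eq (hdvd : Nat.card H / Nat.card ↥(H ⊓ conjSub H x) ∣ s)
    (hs : s ≤ H.relIndex A)
    (hsym : x ^ 2 ∈ A → Odd (s * Nat.card ↥(H ⊓ conjSub H x) / Nat.card H) →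
      ∃ a ∈ A, (H : Set G) * {x * a} * H = H * {(x * a)⁻¹} * H) :
    ∃ V ⊆ x • (A : Set G), (H : Set G) * V * H = V ∧ V.ncard = s * Nat.card H ∧
      (x ^ 2 ∈ A → ∀ g ∈ V, g⁻¹ ∈ V) := by
  set L := conjSub H x ⊔ H
  have hc : Nat.card ↥(H ⊓ conjSub H x) ∣ Nat.card H := Subgroup.card_dvd_of_le inf_le_left
  have hd : 0 < Nat.card H / Nat.card ↥(H ⊓ conjSub H x) :=
    Nat.div_pos (Nat.le_of_dvd Nat.card_pos hc) Nat.card_pos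
  obtain ⟨m, rfl⟩ := hdvd
  have hm : m ≤ ((↑) '' (x • (A : Set G)) : Set (G ⧸ L)).ncard := by
    rw [← div_card_inf_mul_ncard_image_leftCoset hHA hAN x] at hs
    exact Nat.le_of_mul_le_mul_left hs hd
  have hV : ∀ V ⊆ x • (A : Set G), V * L ⊆ V → V.ncard = Nat.card L * m →
      (H : Set G) * V * H = V ∧ V.ncard = Nat.card H / Nat.card ↥(H ⊓ conjSub H x) * m *
        Nat.card H := fun V hVX hVL hVcard =>
    ⟨by rw [mul_mul_eq_mul_sup hHA hAN hVX]; exact hVL.antisymm (Set.subset_mul_left V L.one_mem),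
     by rw [hVcard, card_conjSub_sup hHA hAN]; ring⟩
  by_cases hx2 : x ^ 2 ∈ A
  · obtain ⟨V, hVX, hVL, hVinv, hVcard⟩ := QuotientGroup.exists_inv_closed_subset_ncard_eq
      (leftCoset_mul_sup_subset hHA x) (leftCoset_subset_normalizer_sup hAN hx2)
      (fun g hg => inv_mem_leftCoset hx2 hg) hm fun hodd => by
        rw [← Nat.div_mul_mul_div_cancel hc Nat.card_pos m] at hodd
        obtain ⟨a, ha, hxa⟩ := hsym hx2 hodd
        exact ⟨x * a, ⟨a, ha, rfl⟩, (mul_singleton_mul_eq_inv_iff hHA hAN hx2 ⟨a, ha, rfl⟩).mp hxa⟩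
    exact ⟨V, hVX, (hV V hVX hVL hVcard).1, (hV V hVX hVL hVcard).2, fun _ => hVinv⟩
  · obtain ⟨V, hVX, hVL, hVcard⟩ := QuotientGroup.exists_subset_ncard_eq
      (leftCoset_mul_sup_subset hHA x) hm
    exact ⟨V, hVX, (hV V hVX hVL hVcard).1, (hV V hVX hVL hVcard).2, fun h => absurd h hx2⟩

end Main

section Construction

variable {G : Type*} [Group G] {H A : Subgroup G} [A.Normal] {s : ℕ}

/-- The part over the coset `q` of a connection set in which `A` is a `(0,s)`-regular set. -/
def IsConnectionSlice (H A : Subgroup G) [A.Normal] (s : ℕ) (q : G ⧸ A) (V : Set G) : Prop :=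
  (∀ g ∈ V, (g : G ⧸ A) = q) ∧ (H : Set G) * V * H = V ∧ (q = 1 → V = ∅) ∧
    (q ≠ 1 → V.ncard = s * Nat.card H)

theorem IsConnectionSlice.inv {q : G ⧸ A} {V : Set G} (hV : IsConnectionSlice H A s q V) :
    IsConnectionSlice H A s q⁻¹ V⁻¹ := by
  obtain ⟨hVq, hVH, hV1, hVcard⟩ := hV
  refine ⟨fun g hg => by simpa using congrArg Inv.inv (hVq g⁻¹ hg), ?_,
    fun hq => by rw [hV1 (inv_eq_one.mp hq), Set.inv_empty],
    fun hq => by rw [Set.ncard_inv, hVcard (mt inv_eq_one.mpr hq)]⟩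
  have := congrArg Inv.inv hVH
  rwa [mul_inv_rev, mul_inv_rev, inv_coe_set, ← mul_assoc] at this

theorem exists_isConnectionSlice (hslice : ∀ x : G, x ∉ A → ∃ V ⊆ x • (A : Set G),
      (H : Set G) * V * H = V ∧ V.ncard = s * Nat.card H ∧ (x ^ 2 ∈ A → ∀ g ∈ V, g⁻¹ ∈ V))
    (q : G ⧸ A) : ∃ V, IsConnectionSlice H A s q V ∧ (q⁻¹ = q → V⁻¹ = V) := by
  by_cases hq : q = 1
  · exact ⟨∅, by simp [IsConnectionSlice, hq]⟩
  obtain ⟨x, rfl⟩ := QuotientGroup.mk_surjective q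
  obtain ⟨V, hVx, hVH, hVcard, hVinv⟩ :=
    hslice x (fun hx => hq ((QuotientGroup.eq_one_iff x).mpr hx))
  refine ⟨V, ⟨fun g hg => mem_leftCoset_iff_mk_eq.mp (hVx hg), hVH, fun h => absurd h hq,
    fun _ => hVcard⟩, fun hx => ?_⟩
  have hx2 : x ^ 2 ∈ A := by
    rw [← QuotientGroup.eq_one_iff, QuotientGroup.mk_pow, pow_two, mul_eq_one_iff_eq_inv]
    exact hx.symm
  ext g
  exact ⟨fun hg => by simpa using hVinv hx2 _ hg, fun hg => by simpa using hVinv hx2 g hg⟩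

theorem isCosetGraphConnectionSet_of_isConnectionSlice (hHA : H ≤ A) {W : G ⧸ A → Set G}
    (hW : ∀ q, IsConnectionSlice H A s q (W q) ∧ W q⁻¹ = (W q)⁻¹) :
    IsCosetGraphConnectionSet H {g : G | g ∈ W g} ∧ {g : G | g ∈ W g} ∩ A = ∅ ∧
      ∀ x : G, x ∉ A → ({g : G | g ∈ W g} ∩ x • (A : Set G)).ncard = s * Nat.card H := by
  have hU : ∀ x : G, {g : G | g ∈ W g} ∩ x • (A : Set G) = W x := fun x => by
    ext g
    simp only [Set.mem_inter_iff, Set.mem_ofPred_eq, mem_leftCoset_iff_mk_eq]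
    exact ⟨fun ⟨hg, hgx⟩ => hgx ▸ hg, fun hg => ⟨(hW x).1.1 g hg ▸ hg, (hW x).1.1 g hg⟩⟩
  have hUA : {g : G | g ∈ W g} ∩ A = ∅ := by
    rw [← one_smul G (A : Set G), hU 1]
    exact (hW _).1.2.2.1 (QuotientGroup.mk_one A)
  refine ⟨⟨?_, ?_, ?_⟩, hUA, fun x hx => ?_⟩
  · ext g
    simp only [Set.mem_inv, Set.mem_ofPred_eq, QuotientGroup.mk_inv]
    rw [(hW _).2, Set.mem_inv, inv_inv]
  · rw [Set.eq_empty_iff_forall_notMem]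
    exact fun g ⟨hgH, hgU⟩ => Set.eq_empty_iff_forall_notMem.mp hUA g ⟨hgU, hHA hgH⟩
  · refine Set.Subset.antisymm ?_ fun g hg =>
      ⟨1 * g, ⟨1, H.one_mem, g, hg, rfl⟩, 1, H.one_mem, by simp⟩
    rintro _ ⟨_, ⟨h, hh, g, hg, rfl⟩, h', hh', rfl⟩
    have hq : ((h * g * h' : G) : G ⧸ A) = g := by
      rw [QuotientGroup.mk_mul_of_mem _ (hHA hh'), QuotientGroup.mk_mul,
        (QuotientGroup.eq_one_iff h).mpr (hHA hh), one_mul]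
    change h * g * h' ∈ W _
    rw [hq, ← (hW g).1.2.1]
    exact Set.mul_mem_mul (Set.mul_mem_mul hh hg) hh'
  · rw [hU]
    exact (hW x).1.2.2.2 (mt (QuotientGroup.eq_one_iff x).mp hx)

theorem exists_connectionSet_ncard_inter_leftCoset_eq (hHA : H ≤ A)
    (hslice : ∀ x : G, x ∉ A → ∃ V ⊆ x • (A : Set G), (H : Set G) * V * H = V ∧
      V.ncard = s * Nat.card H ∧ (x ^ 2 ∈ A → ∀ g ∈ V, g⁻¹ ∈ V)) :
    ∃ U : Set G, IsCosetGraphConnectionSet H U ∧ U ∩ A = ∅ ∧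
      ∀ x : G, x ∉ A → (U ∩ x • (A : Set G)).ncard = s * Nat.card H := by
  obtain ⟨W, hW⟩ := exists_inv_compatible_family (IsConnectionSlice H A s)
    (fun _ _ hV => hV.inv) (exists_isConnectionSlice hslice)
  exact ⟨_, isCosetGraphConnectionSet_of_isConnectionSlice hHA hW⟩

end Construction

/-- **Lemma (key2).** Let `H ⊴ A ⊴ G` and `0 ≤ s ≤ |A:H|`. Then `A` is a `(0,s)`-regular
set of `(G,H)` iff (1) `|H|/|H ∩ H^t|` divides `s` for every `t ∈ G∖A`, and (2) for every
`x ∈ G∖A` with `x² ∈ A` and `s·|H ∩ H^x|/|H|` odd, there exists `a ∈ A` with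
`HxaH = H(xa)⁻¹H`. -/
theorem lemma_key2 {G : Type*} [Group G] [Fintype G] (H A : Subgroup G) (hHA : H ≤ A)
    (hHnA : (H.subgroupOf A).Normal) (hAnG : A.Normal) (s : ℕ) (hs : s ≤ H.relIndex A) :
    IsRegularSetOfPair H A 0 s ↔
      (∀ t : G, t ∉ A → (Nat.card ↥H / Nat.card ↥(H ⊓ conjSub H t)) ∣ s) ∧
      (∀ x : G, x ∉ A → x ^ 2 ∈ A →
        Odd (s * Nat.card ↥(H ⊓ conjSub H x) / Nat.card ↥H) →
        ∃ a ∈ A, (H : Set G) * {x * a} * (H : Set G)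
          = (H : Set G) * {(x * a)⁻¹} * (H : Set G)) := by
  have hAN : A ≤ Subgroup.normalizer (H : Set G) :=
    (Subgroup.normal_subgroupOf_iff_le_normalizer hHA).mp hHnA
  constructor
  · rintro ⟨U, hU, hreg⟩
    have hcount := ((isRegularVertexSet_zero_iff hHA hU s).mp hreg).2
    exact ⟨fun t ht => ⟨_, eq_div_card_inf_mul_ncard_image hHA hAN hU (hcount t ht)⟩,
      fun x hx => exists_mul_singleton_mul_eq_inv hHA hAN hU (hcount x hx)⟩
  · rintro ⟨hdvd, hsym⟩
    obtain ⟨U, hU, hUA, hcount⟩ := exists_connectionSet_ncard_inter_leftCoset_eq hHA fun x hx =>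
      exists_subset_leftCoset_ncard_eq hHA hAN (hdvd x hx) hs (hsym x hx)
    exact ⟨U, hU, (isRegularVertexSet_zero_iff hHA hU s).mpr ⟨hUA, hcount⟩⟩
end

section
/- Let G be a finite group with subgroups H ⊴ A ⊴ G (H normal in A and A normal in G). Then A is a perfect code of the pair (G,H) if and only if H is normal in G and A/H is a perfect code of the group G/H. -/
open scoped Pointwise

lemma adj_iff {G : Type*} [Group G] {H : Subgroup G} {U : Set G}
    (hU : IsCosetGraphConnectionSet H U) (x y : G) :
    (cosetGraph H U).Adj (QuotientGroup.mk x) (QuotientGroup.mk y) ↔ x⁻¹ * y ∈ U := by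
  obtain ⟨hinv, hdisj, hdc⟩ := hU
  have hHU : ∀ h ∈ H, ∀ u ∈ U, ∀ h' ∈ H, h * u * h' ∈ U := by
    intro h hh u hu h' hh'
    rw [← hdc]
    exact Set.mul_mem_mul (Set.mul_mem_mul hh hu) hh'
  constructor
  · rintro ⟨hne, h | h⟩
    · obtain ⟨g₁, g₂, h1, h2, hu⟩ := h
      have hh1 : g₁⁻¹ * x ∈ H := (QuotientGroup.eq).mp h1
      have hh2 : g₂⁻¹ * y ∈ H := (QuotientGroup.eq).mp h2
      have : (g₁⁻¹ * x)⁻¹ * (g₁⁻¹ * g₂) * (g₂⁻¹ * y) ∈ U :=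
        hHU _ (inv_mem hh1) _ hu _ hh2
      simpa [mul_assoc] using this
    · obtain ⟨g₁, g₂, h1, h2, hu⟩ := h
      have hh1 : g₁⁻¹ * y ∈ H := (QuotientGroup.eq).mp h1
      have hh2 : g₂⁻¹ * x ∈ H := (QuotientGroup.eq).mp h2
      have : (g₁⁻¹ * y)⁻¹ * (g₁⁻¹ * g₂) * (g₂⁻¹ * x) ∈ U :=
        hHU _ (inv_mem hh1) _ hu _ hh2
      have h2' : y⁻¹ * x ∈ U := by simpa [mul_assoc] using this
      have : (y⁻¹ * x)⁻¹ ∈ U⁻¹ := Set.inv_mem_inv.mpr h2'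
      rw [hinv] at this
      simpa using this
  · intro hu
    refine ⟨?_, Or.inl ⟨x, y, rfl, rfl, hu⟩⟩
    intro heq
    have hmem : x⁻¹ * y ∈ H := (QuotientGroup.eq).mp heq
    have : x⁻¹ * y ∈ (H : Set G) ∩ U := ⟨hmem, hu⟩
    rw [hdisj] at this
    exact this

lemma regular_transfer_mp {V W : Type*} (e : V ≃ W) (Γ : SimpleGraph V) (Γ' : SimpleGraph W)
    (hadj : ∀ a b, Γ.Adj a b ↔ Γ'.Adj (e a) (e b)) (C : Set V) (r s : ℕ)
    (h : IsRegularVertexSet Γ C r s) : IsRegularVertexSet Γ' (e '' C) r s := by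
  have key : ∀ w : W, {w' | w' ∈ e '' C ∧ Γ'.Adj w w'}
      = e '' {v' | v' ∈ C ∧ Γ.Adj (e.symm w) v'} := by
    intro w
    ext w'
    simp only [Set.mem_setOf_eq, Set.mem_image]
    constructor
    · rintro ⟨⟨v', hv', rfl⟩, hadj'⟩
      exact ⟨v', ⟨hv', (hadj _ _).mpr (by simpa using hadj')⟩, rfl⟩
    · rintro ⟨v', ⟨hv', ha⟩, rfl⟩
      refine ⟨⟨v', hv', rfl⟩, ?_⟩
      have := (hadj _ _).mp ha
      simpa using this
  obtain ⟨h0, h1⟩ := h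
  constructor
  · rintro w ⟨v, hv, rfl⟩
    rw [key, Set.ncard_image_of_injective _ e.injective]
    simpa using h0 v hv
  · intro w hw
    rw [key, Set.ncard_image_of_injective _ e.injective]
    refine h1 _ ?_
    intro hc
    exact hw ⟨_, hc, by simp⟩

lemma regular_transfer {V W : Type*} (e : V ≃ W) (Γ : SimpleGraph V) (Γ' : SimpleGraph W)
    (hadj : ∀ a b, Γ.Adj a b ↔ Γ'.Adj (e a) (e b)) (C : Set V) (r s : ℕ) :
    IsRegularVertexSet Γ C r s ↔ IsRegularVertexSet Γ' (e '' C) r s := by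
  constructor
  · exact regular_transfer_mp e Γ Γ' hadj C r s
  · intro h
    have := regular_transfer_mp e.symm Γ' Γ
      (fun a b => by rw [hadj (e.symm a) (e.symm b)]; simp) (e '' C) r s h
    simpa [Equiv.symm_image_image] using this

section Quot
variable {G : Type*} [Group G] (H : Subgroup G) [hn : H.Normal]

lemma preimage_conn (V : Set (G ⧸ H))
    (hV : IsCosetGraphConnectionSet (⊥ : Subgroup (G ⧸ H)) V) :
    IsCosetGraphConnectionSet H ((QuotientGroup.mk' H) ⁻¹' V) := by
  obtain ⟨hinv, hdisj, -⟩ := hV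
  have h1V : (1 : G ⧸ H) ∉ V := by
    intro h1
    have : (1 : G ⧸ H) ∈ ((⊥ : Subgroup (G ⧸ H)) : Set (G ⧸ H)) ∩ V := ⟨one_mem _, h1⟩
    rw [hdisj] at this
    exact this
  refine ⟨?_, ?_, ?_⟩
  · ext x
    simp only [Set.mem_inv, Set.mem_preimage, map_inv]
    constructor
    · intro h
      have h2 : (((QuotientGroup.mk' H) x)⁻¹)⁻¹ ∈ V⁻¹ := Set.inv_mem_inv.mpr h
      rw [hinv] at h2
      simpa using h2
    · intro h
      have h2 : ((QuotientGroup.mk' H) x)⁻¹ ∈ V⁻¹ := Set.inv_mem_inv.mpr h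
      rwa [hinv] at h2
  · ext x
    simp only [Set.mem_inter_iff, Set.mem_preimage, SetLike.mem_coe, Set.mem_empty_iff_false,
      iff_false, not_and]
    intro hx
    have : QuotientGroup.mk' H x = 1 := (QuotientGroup.eq_one_iff x).mpr hx
    rw [this]
    exact h1V
  · ext x
    simp only [Set.mem_preimage]
    constructor
    · intro hx
      rw [Set.mem_mul] at hx
      obtain ⟨w, hw, h₂, hh₂, rfl⟩ := hx
      rw [Set.mem_mul] at hw
      obtain ⟨h₁, hh₁, u, hu, rfl⟩ := hw
      have e1 : QuotientGroup.mk' H h₁ = 1 := (QuotientGroup.eq_one_iff _).mpr hh₁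
      have e2 : QuotientGroup.mk' H h₂ = 1 := (QuotientGroup.eq_one_iff _).mpr hh₂
      simpa [map_mul, e1, e2] using hu
    · intro hx
      rw [Set.mem_mul]
      refine ⟨x, ?_, 1, H.one_mem, mul_one x⟩
      rw [Set.mem_mul]
      exact ⟨1, H.one_mem, x, hx, one_mul x⟩

/-- The canonical bijection `G/H ≃ (G/H)/⊥`. -/
noncomputable def botEquiv : G ⧸ H ≃ (G ⧸ H) ⧸ (⊥ : Subgroup (G ⧸ H)) :=
  (QuotientGroup.quotientBot (G := G ⧸ H)).symm.toEquiv

lemma botEquiv_mk (x : G) :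
    botEquiv H (QuotientGroup.mk x) =
      QuotientGroup.mk (QuotientGroup.mk' H x) := by
  simp [botEquiv, QuotientGroup.quotientBot]
  rfl

lemma main_transfer (A : Subgroup G) (V : Set (G ⧸ H))
    (hV : IsCosetGraphConnectionSet (⊥ : Subgroup (G ⧸ H)) V) (r s : ℕ) :
    IsRegularVertexSet (cosetGraph H ((QuotientGroup.mk' H) ⁻¹' V))
      {C : G ⧸ H | ∃ a ∈ A, QuotientGroup.mk a = C} r s ↔
    IsRegularVertexSet (cosetGraph (⊥ : Subgroup (G ⧸ H)) V)
      {C | ∃ b ∈ Subgroup.map (QuotientGroup.mk' H) A, QuotientGroup.mk b = C} r s := by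
  have hU : IsCosetGraphConnectionSet H ((QuotientGroup.mk' H) ⁻¹' V) := preimage_conn H V hV
  have hadj : ∀ a b : G ⧸ H, (cosetGraph H ((QuotientGroup.mk' H) ⁻¹' V)).Adj a b ↔
      (cosetGraph (⊥ : Subgroup (G ⧸ H)) V).Adj (botEquiv H a) (botEquiv H b) := by
    intro a b
    induction a using QuotientGroup.induction_on with
    | H x =>
    induction b using QuotientGroup.induction_on with
    | H y =>
    rw [botEquiv_mk, botEquiv_mk, adj_iff hU, adj_iff hV]
    simp
  have himg : botEquiv H '' {C : G ⧸ H | ∃ a ∈ A, QuotientGroup.mk a = C} =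
      {C | ∃ b ∈ Subgroup.map (QuotientGroup.mk' H) A, QuotientGroup.mk b = C} := by
    ext w
    simp only [Set.mem_image, Set.mem_setOf_eq, Subgroup.mem_map]
    constructor
    · rintro ⟨-, ⟨a, ha, rfl⟩, rfl⟩
      exact ⟨_, ⟨a, ha, rfl⟩, (botEquiv_mk H a).symm⟩
    · rintro ⟨-, ⟨a, ha, rfl⟩, rfl⟩
      exact ⟨_, ⟨a, ha, rfl⟩, botEquiv_mk H a⟩
  rw [regular_transfer (botEquiv H) _ _ hadj, himg]

end Quot

/-- **Corollary.** Let `H ⊴ A ⊴ G`. Then `A` is a perfect code of `(G,H)` iff `H` is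
normal in `G` and `A/H` is a perfect code of the group `G/H`. -/
theorem corollary_quotient {G : Type*} [Group G] [Fintype G] (H A : Subgroup G)
    (hHA : H ≤ A) (hHnA : (H.subgroupOf A).Normal) (hAnG : A.Normal) :
    IsPerfectCodeOfPair H A ↔
      ∃ hn : H.Normal,
        IsPerfectCodeOfGroup (Subgroup.map (QuotientGroup.mk' H (nN := hn)) A) := by
  constructor
  · rintro ⟨U, hUc, hreg⟩
    obtain ⟨hinv, hdisj, hdc⟩ := hUc
    have hUc' : IsCosetGraphConnectionSet H U := ⟨hinv, hdisj, hdc⟩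
    obtain ⟨h0, h1⟩ := hreg
    have hHUH : ∀ h ∈ H, ∀ u ∈ U, ∀ h' ∈ H, h * u * h' ∈ U := by
      intro h hh u hu h' hh'
      rw [← hdc]
      exact Set.mul_mem_mul (Set.mul_mem_mul hh hu) hh'
    have hUinv : ∀ u ∈ U, u⁻¹ ∈ U := by
      intro u hu
      have : u⁻¹ ∈ U⁻¹ := Set.inv_mem_inv.mpr hu
      rwa [hinv] at this
    have hAconj : ∀ a ∈ A, ∀ h ∈ H, a * h * a⁻¹ ∈ H := by
      intro a ha h hh
      have hmem : (⟨h, hHA hh⟩ : A) ∈ H.subgroupOf A := by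
        simpa [Subgroup.mem_subgroupOf] using hh
      have := hHnA.conj_mem _ hmem ⟨a, ha⟩
      simpa [Subgroup.mem_subgroupOf] using this
    have hcode_mem : ∀ g : G, ((QuotientGroup.mk g : G ⧸ H)
        ∈ {C : G ⧸ H | ∃ a ∈ A, QuotientGroup.mk a = C}) ↔ g ∈ A := by
      intro g
      constructor
      · rintro ⟨a, ha, hae⟩
        have hH : a⁻¹ * g ∈ H := (QuotientGroup.eq).mp hae
        have : a * (a⁻¹ * g) ∈ A := A.mul_mem ha (hHA hH)
        simpa using this
      · intro hg
        exact ⟨g, hg, rfl⟩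
    have hUA : ∀ u ∈ U, u ∉ A := by
      intro u hu huA
      have h0' := h0 (QuotientGroup.mk (1 : G)) ⟨1, A.one_mem, rfl⟩
      rw [Set.ncard_eq_zero (Set.toFinite _)] at h0'
      have hmem : (QuotientGroup.mk u : G ⧸ H) ∈
          {w | w ∈ {C : G ⧸ H | ∃ a ∈ A, QuotientGroup.mk a = C}
            ∧ (cosetGraph H U).Adj (QuotientGroup.mk (1 : G)) w} := by
        refine ⟨⟨u, huA, rfl⟩, ?_⟩
        rw [adj_iff hUc']
        simpa using hu
      rw [h0'] at hmem
      exact hmem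
    have hBstep : ∀ u ∈ U, ∀ h ∈ H, u * h * u⁻¹ ∈ H := by
      intro u hu h hh
      have hnc : (QuotientGroup.mk u : G ⧸ H)
          ∉ {C : G ⧸ H | ∃ a ∈ A, QuotientGroup.mk a = C} := by
        rw [hcode_mem]
        exact hUA u hu
      obtain ⟨w₀, hw₀⟩ := Set.ncard_eq_one.mp (h1 _ hnc)
      have m1 : (QuotientGroup.mk (1 : G) : G ⧸ H) ∈
          {w | w ∈ {C : G ⧸ H | ∃ a ∈ A, QuotientGroup.mk a = C}
            ∧ (cosetGraph H U).Adj (QuotientGroup.mk u) w} := by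
        refine ⟨⟨1, A.one_mem, rfl⟩, ?_⟩
        rw [adj_iff hUc']
        simpa using hUinv u hu
      have m2 : (QuotientGroup.mk (u * h * u⁻¹) : G ⧸ H) ∈
          {w | w ∈ {C : G ⧸ H | ∃ a ∈ A, QuotientGroup.mk a = C}
            ∧ (cosetGraph H U).Adj (QuotientGroup.mk u) w} := by
        refine ⟨⟨_, hAnG.conj_mem h (hHA hh) u, rfl⟩, ?_⟩
        rw [adj_iff hUc']
        have : h * u⁻¹ * 1 ∈ U := hHUH h hh u⁻¹ (hUinv u hu) 1 H.one_mem
        have heq : u⁻¹ * (u * h * u⁻¹) = h * u⁻¹ * 1 := by group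
        rwa [heq]
      rw [hw₀, Set.mem_singleton_iff] at m1 m2
      have heq : (QuotientGroup.mk (u * h * u⁻¹) : G ⧸ H) = QuotientGroup.mk (1 : G) :=
        m2.trans m1.symm
      have : (u * h * u⁻¹)⁻¹ * 1 ∈ H := (QuotientGroup.eq).mp heq
      have : (u * h * u⁻¹)⁻¹ ∈ H := by simpa using this
      exact (H.inv_mem_iff).mp this
    have hn : H.Normal := by
      constructor
      intro h hh g
      by_cases hg : g ∈ A
      · exact hAconj g hg h hh
      · have hnc : (QuotientGroup.mk g : G ⧸ H)
            ∉ {C : G ⧸ H | ∃ a ∈ A, QuotientGroup.mk a = C} := by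
          rw [hcode_mem]; exact hg
        obtain ⟨w₀, hw₀⟩ := Set.ncard_eq_one.mp (h1 _ hnc)
        have hw₀mem : w₀ ∈ {w | w ∈ {C : G ⧸ H | ∃ a ∈ A, QuotientGroup.mk a = C}
            ∧ (cosetGraph H U).Adj (QuotientGroup.mk g) w} := by
          rw [hw₀]; exact Set.mem_singleton w₀
        obtain ⟨⟨a, ha, rfl⟩, hadj⟩ := hw₀mem
        rw [adj_iff hUc'] at hadj
        have hu' : a⁻¹ * g ∈ U := by
          have : (g⁻¹ * a)⁻¹ ∈ U := hUinv _ hadj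
          simpa using this
        have hB := hBstep _ hu' h hh
        have hA' := hAconj a ha _ hB
        have heq : a * (a⁻¹ * g * h * (a⁻¹ * g)⁻¹) * a⁻¹ = g * h * g⁻¹ := by group
        rwa [heq] at hA'
    haveI := hn
    refine ⟨hn, ?_⟩
    set V := (QuotientGroup.mk' H) '' U with hVdef
    have hpre : (QuotientGroup.mk' H) ⁻¹' V = U := by
      ext x
      simp only [hVdef, Set.mem_preimage, Set.mem_image, QuotientGroup.mk'_apply]
      constructor
      · rintro ⟨u, hu, he⟩
        have hH : u⁻¹ * x ∈ H := (QuotientGroup.eq).mp he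
        have : 1 * u * (u⁻¹ * x) ∈ U := hHUH 1 H.one_mem u hu _ hH
        simpa [mul_assoc] using this
      · intro hx
        exact ⟨x, hx, rfl⟩
    have hVconn : IsCosetGraphConnectionSet (⊥ : Subgroup (G ⧸ H)) V := by
      refine ⟨?_, ?_, ?_⟩
      · ext v
        simp only [hVdef, Set.mem_inv, Set.mem_image, QuotientGroup.mk'_apply]
        constructor
        · rintro ⟨u, hu, he⟩
          refine ⟨u⁻¹, hUinv u hu, ?_⟩
          simp [he]
        · rintro ⟨u, hu, rfl⟩
          exact ⟨u⁻¹, hUinv u hu, by simp⟩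
      · ext v
        simp only [Set.mem_inter_iff, SetLike.mem_coe, Subgroup.mem_bot,
          Set.mem_empty_iff_false, iff_false, not_and]
        rintro rfl ⟨u, hu, he⟩
        have : u ∈ H := (QuotientGroup.eq_one_iff u).mp (by simpa using he)
        have : u ∈ (H : Set G) ∩ U := ⟨this, hu⟩
        rw [hdisj] at this
        exact this
      · have hb : ((⊥ : Subgroup (G ⧸ H)) : Set (G ⧸ H)) = {1} := Subgroup.coe_bot
        rw [hb]
        simp [Set.singleton_mul, Set.mul_singleton, Set.image_image]
    exact ⟨V, hVconn, (main_transfer H A V hVconn 0 1).mp (by rw [hpre]; exact ⟨h0, h1⟩)⟩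
  · rintro ⟨hn, V, hVconn, hreg⟩
    haveI := hn
    exact ⟨(QuotientGroup.mk' H) ⁻¹' V, preimage_conn H V hVconn,
      (main_transfer H A V hVconn 0 1).mpr hreg⟩
end

section
/- Let G be a finite group with subgroups H ≤ A ≤ G, and suppose A is a perfect code of the pair (G,H). Then for every g ∈ G there exists a ∈ A such that A^{ga} ∩ H = H^{ga} ∩ H, where for y ∈ G, A^y = y⁻¹Ay and H^y = y⁻¹Hy. -/
open scoped Pointwise

lemma conjSub_one {G : Type*} [Group G] (K : Subgroup G) : conjSub K 1 = K := by
  ext x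
  simp [conjSub, Subgroup.mem_map]

lemma mem_conjSub {G : Type*} [Group G] (K : Subgroup G) (t x : G) :
    x ∈ conjSub K t ↔ ∃ k ∈ K, t⁻¹ * k * t = x := by
  simp [conjSub, Subgroup.mem_map]

/-- **Lemma.** Let `H ≤ A ≤ G` and suppose `A` is a perfect code of `(G,H)`. Then for
every `g ∈ G` there exists `a ∈ A` such that `A^{ga} ∩ H = H^{ga} ∩ H`. -/
theorem lemma_conjIntersection {G : Type*} [Group G] [Fintype G] (H A : Subgroup G)
    (hHA : H ≤ A) (hpc : IsPerfectCodeOfPair H A) :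
    ∀ g : G, ∃ a ∈ A, conjSub A (g * a) ⊓ H = conjSub H (g * a) ⊓ H := by
  intro g
  obtain ⟨U, ⟨hUinv, hUH, hHUH⟩, _, hreg1⟩ := hpc
  set D : Set (G ⧸ H) := {C : G ⧸ H | ∃ a ∈ A, QuotientGroup.mk a = C} with hD
  have hmemD : ∀ x : G, (QuotientGroup.mk x : G ⧸ H) ∈ D ↔ x ∈ A := by
    intro x
    constructor
    · rintro ⟨a, ha, hax⟩
      rw [QuotientGroup.eq] at hax
      have := A.mul_mem ha (hHA hax)
      simpa using this
    · intro hx; exact ⟨x, hx, rfl⟩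
  have hUHmem : ∀ u ∈ U, ∀ h₁ ∈ H, ∀ h₂ ∈ H, h₁ * u * h₂ ∈ U := by
    intro u hu h₁ hh₁ h₂ hh₂
    rw [← hHUH]
    exact Set.mul_mem_mul (Set.mul_mem_mul hh₁ hu) hh₂
  have hnotH : ∀ u ∈ U, u ∉ H := by
    intro u hu huH
    have : u ∈ (H : Set G) ∩ U := ⟨huH, hu⟩
    rw [hUH] at this
    exact this.elim
  have hadj : ∀ x y : G, (cosetGraph H U).Adj (QuotientGroup.mk x) (QuotientGroup.mk y) ↔
      (x⁻¹ * y ∈ U ∧ (QuotientGroup.mk x : G ⧸ H) ≠ QuotientGroup.mk y) := by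
    intro x y
    constructor
    · rintro ⟨hne, hrel⟩
      refine ⟨?_, hne⟩
      rcases hrel with ⟨g₁, g₂, h₁, h₂, hu⟩ | ⟨g₁, g₂, h₁, h₂, hu⟩
      · rw [QuotientGroup.eq] at h₁ h₂
        have : (g₁⁻¹ * x)⁻¹ * (g₁⁻¹ * g₂) * (g₂⁻¹ * y) = x⁻¹ * y := by group
        rw [← this]
        exact hUHmem _ hu _ (H.inv_mem h₁) _ h₂
      · rw [QuotientGroup.eq] at h₁ h₂
        have hyx : (g₁⁻¹ * y)⁻¹ * (g₁⁻¹ * g₂) * (g₂⁻¹ * x) = y⁻¹ * x := by group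
        have hmem : y⁻¹ * x ∈ U := by
          rw [← hyx]; exact hUHmem _ hu _ (H.inv_mem h₁) _ h₂
        have : x⁻¹ * y ∈ U⁻¹ := by
          rw [Set.mem_inv]; simpa using hmem
        rwa [hUinv] at this
    · rintro ⟨hu, hne⟩
      exact ⟨hne, Or.inl ⟨x, y, rfl, rfl, hu⟩⟩
  by_cases hg : g ∈ A
  · refine ⟨g⁻¹, A.inv_mem hg, ?_⟩
    rw [mul_inv_cancel, conjSub_one, conjSub_one, inf_eq_right.mpr hHA, inf_idem]
  · -- g⁻¹H is not in D, so it has a neighbour aH in D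
    have hg' : (QuotientGroup.mk g⁻¹ : G ⧸ H) ∉ D := by
      rw [hmemD]; simpa using hg
    obtain ⟨C, hC⟩ := Set.ncard_eq_one.mp (hreg1 _ hg')
    obtain ⟨hCmem, hCuniq⟩ := Set.eq_singleton_iff_unique_mem.mp hC
    obtain ⟨⟨a, ha, haC⟩, hadjC⟩ := hCmem
    rw [← haC] at hadjC
    rw [hadj] at hadjC
    have hx : g * a ∈ U := by simpa using hadjC.1
    refine ⟨a, ha, le_antisymm ?_ (inf_le_inf_right H (Subgroup.map_mono hHA))⟩
    intro h hh
    obtain ⟨hhA, hhH⟩ := Subgroup.mem_inf.mp hh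
    set x := g * a with hxdef
    rw [mem_conjSub] at hhA
    obtain ⟨α, hα, heq⟩ := hhA
    -- show α ∈ H using uniqueness of the neighbour of xH
    have hxD : (QuotientGroup.mk x : G ⧸ H) ∉ D := by
      rw [hmemD]
      intro hxa
      exact hg (by simpa [hxdef, mul_assoc] using A.mul_mem hxa (A.inv_mem ha))
    obtain ⟨C', hC'⟩ := Set.ncard_eq_one.mp (hreg1 _ hxD)
    obtain ⟨_, hC'uniq⟩ := Set.eq_singleton_iff_unique_mem.mp hC'
    have hxinv : x⁻¹ ∈ U := by
      rw [← hUinv, Set.mem_inv]; simpa using hx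
    have hxnotH : x ∉ H := hnotH _ hx
    have hn1 : (QuotientGroup.mk (1:G) : G ⧸ H) ∈ {w | w ∈ D ∧ (cosetGraph H U).Adj (QuotientGroup.mk x) w} := by
      refine ⟨(hmemD 1).mpr A.one_mem, ?_⟩
      rw [hadj]
      refine ⟨by simpa using hxinv, ?_⟩
      intro hcon
      rw [QuotientGroup.eq] at hcon
      exact hxnotH (by simpa using H.inv_mem hcon)
    have hxα : x⁻¹ * α = (h : G) * x⁻¹ := by
      have : x⁻¹ * α * x = (h : G) := heq
      calc x⁻¹ * α = x⁻¹ * α * x * x⁻¹ := by group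
        _ = (h : G) * x⁻¹ := by rw [this]
    have hn2 : (QuotientGroup.mk α : G ⧸ H) ∈ {w | w ∈ D ∧ (cosetGraph H U).Adj (QuotientGroup.mk x) w} := by
      refine ⟨(hmemD α).mpr hα, ?_⟩
      rw [hadj]
      constructor
      · rw [hxα]
        have := hUHmem _ hxinv _ hhH _ H.one_mem
        simpa using this
      · intro hcon
        rw [QuotientGroup.eq, hxα] at hcon
        have : x⁻¹ ∈ H := by
          have := H.mul_mem (H.inv_mem hhH) hcon
          simpa [mul_assoc] using this
        exact hxnotH (by simpa using H.inv_mem this)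
    have h1C : (QuotientGroup.mk (1:G) : G ⧸ H) = C' := hC'uniq _ hn1
    have hαC : (QuotientGroup.mk α : G ⧸ H) = C' := hC'uniq _ hn2
    have hαH : α ∈ H := by
      have : (QuotientGroup.mk α : G ⧸ H) = QuotientGroup.mk (1:G) := by rw [hαC, h1C]
      rw [QuotientGroup.eq] at this
      simpa using H.inv_mem this
    exact Subgroup.mem_inf.mpr ⟨(mem_conjSub H x h).mpr ⟨α, hαH, heq⟩, hhH⟩
end

section
/- Let G be a finite group with subgroups H ⊴ A ≤ G (H normal in A), and suppose A is a perfect code of the pair (G,H). Then for every x ∈ G, the cardinality of the set HA^x = {h·a : h ∈ H, a ∈ A^x} divides the cardinality of the set AA^x = {a·b : a ∈ A, b ∈ A^x}, where A^x = x⁻¹Ax. -/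
open scoped Pointwise

/-- **Corollary.** Let `H ⊴ A ≤ G` and suppose `A` is a perfect code of `(G,H)`. Then
for every `x ∈ G`, `|H·A^x|` divides `|A·A^x|`. -/
theorem corollary_cardDvd {G : Type*} [Group G] [Fintype G] (H A : Subgroup G)
    (hHA : H ≤ A) (hHnA : (H.subgroupOf A).Normal) (hpc : IsPerfectCodeOfPair H A) :
    ∀ x : G,
      ((H : Set G) * (conjSub A x : Set G)).ncard ∣
        ((A : Set G) * (conjSub A x : Set G)).ncard := by
  classical
  intro x
  set B : Subgroup G := conjSub A x with hBdef
  set S : Set G := (H : Set G) * (B : Set G) with hSdef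
  have hnorm : ∀ a ∈ A, ∀ h ∈ H, a * h * a⁻¹ ∈ H := by
    intro a ha h hh
    have := hHnA.conj_mem ⟨h, hHA hh⟩ (by simpa [Subgroup.mem_subgroupOf] using hh) ⟨a, ha⟩
    simpa [Subgroup.mem_subgroupOf] using this
  have hcomm : ∀ c ∈ A, ({c} : Set G) * (H : Set G) = (H : Set G) * {c} := by
    intro c hc
    ext g
    simp only [Set.mem_mul, Set.mem_singleton_iff]
    constructor
    · rintro ⟨y, hy, h, hh, he⟩
      refine ⟨c * h * c⁻¹, hnorm c hc h hh, c, rfl, ?_⟩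
      rw [← he, hy]; group
    · rintro ⟨h, hh, y, hy, he⟩
      refine ⟨c, rfl, c⁻¹ * h * c, by simpa using hnorm c⁻¹ (A.inv_mem hc) h hh, ?_⟩
      rw [← he, hy]; group
  have hsingle : ∀ (a : G) (t : Set G), a • t = ({a} : Set G) * t := by
    intro a t
    rw [Set.singleton_mul]
    rfl
  have lstep : ∀ (u v : G) (t : Set G), ({u * v} : Set G) * t = {u} * ({v} * t) := by
    intro u v t
    rw [← Set.singleton_mul_singleton, mul_assoc]
  have hstab : ∀ h ∈ H, ∀ c, c ∈ A → c ∈ B → ∀ h' ∈ H, (h * c * h') • S = S := by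
    intro h hh c hcA hcB h' hh'
    rw [hsingle, hSdef]
    rw [lstep, lstep, ← mul_assoc ({h'} : Set G), Subgroup.singleton_mul_subgroup hh',
      ← mul_assoc ({c} : Set G), hcomm c hcA, mul_assoc (H : Set G),
      Subgroup.singleton_mul_subgroup hcB, ← mul_assoc ({h} : Set G),
      Subgroup.singleton_mul_subgroup hh]
  have hkey : ∀ a ∈ A, ∀ a' ∈ A, ((a • S) ∩ (a' • S)).Nonempty → a • S = a' • S := by
    rintro a ha a' ha' ⟨g, hg1, hg2⟩
    obtain ⟨s, hs, rfl⟩ := hg1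
    obtain ⟨s', hs', heq⟩ := hg2
    obtain ⟨h, hh, b, hb, rfl⟩ := hs
    obtain ⟨h', hh', b', hb', rfl⟩ := hs'
    have heq' : a' * (h' * b') = a * (h * b) := heq
    have hd : a'⁻¹ * a = h' * (b' * b⁻¹) * h⁻¹ := by
      calc a'⁻¹ * a = a'⁻¹ * (a * (h * b)) * (h * b)⁻¹ := by group
        _ = a'⁻¹ * (a' * (h' * b')) * (h * b)⁻¹ := by rw [heq']
        _ = h' * (b' * b⁻¹) * h⁻¹ := by group
    have hcB : b' * b⁻¹ ∈ B := B.mul_mem hb' (B.inv_mem hb)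
    have hcA : b' * b⁻¹ ∈ A := by
      have hdA : a'⁻¹ * a ∈ A := A.mul_mem (A.inv_mem ha') ha
      have : b' * b⁻¹ = h'⁻¹ * (a'⁻¹ * a) * h := by rw [hd]; group
      rw [this]
      exact A.mul_mem (A.mul_mem (A.inv_mem (hHA hh')) hdA) (hHA hh)
    have hdS : (a'⁻¹ * a) • S = S := by
      rw [hd]
      exact hstab h' hh' (b' * b⁻¹) hcA hcB h⁻¹ (H.inv_mem hh)
    calc a • S = (a' * (a'⁻¹ * a)) • S := by rw [mul_inv_cancel_left]
      _ = a' • ((a'⁻¹ * a) • S) := by rw [mul_smul]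
      _ = a' • S := by rw [hdS]
  have hT : (A : Set G) * (B : Set G) = ⋃ a ∈ (A : Set G), a • S := by
    ext g
    simp only [Set.mem_iUnion, SetLike.mem_coe]
    constructor
    · rintro hg
      obtain ⟨a, ha, b, hb, rfl⟩ := hg
      exact ⟨a, ha, ⟨b, ⟨1, H.one_mem, b, hb, one_mul b⟩, rfl⟩⟩
    · rintro ⟨a, ha, s, hs, rfl⟩
      obtain ⟨h, hh, b, hb, rfl⟩ := hs
      exact ⟨a * h, A.mul_mem ha (hHA hh), b, hb, by simp [mul_assoc]⟩
  -- counting via finsets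
  set Sf : Finset G := (Set.toFinite S).toFinset with hSf
  have hSfcoe : (Sf : Set G) = S := Set.Finite.coe_toFinset _
  set P : Finset (Finset G) :=
    (Set.toFinite (A : Set G)).toFinset.image (fun a => a • Sf) with hP
  have hmemP : ∀ Q ∈ P, ∃ a ∈ A, Q = a • Sf := by
    intro Q hQ
    simp only [hP, Finset.mem_image, Set.Finite.mem_toFinset, SetLike.mem_coe] at hQ
    obtain ⟨a, ha, rfl⟩ := hQ
    exact ⟨a, ha, rfl⟩
  have hsmulcoe : ∀ a : G, ((a • Sf : Finset G) : Set G) = a • S := by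
    intro a
    rw [Finset.coe_smul_finset, hSfcoe]
  have hdisj : ∀ Q ∈ P, ∀ R ∈ P, Q ≠ R → Disjoint (id Q) (id R) := by
    intro Q hQ R hR hQR
    obtain ⟨a, ha, rfl⟩ := hmemP Q hQ
    obtain ⟨a', ha', rfl⟩ := hmemP R hR
    by_contra hnd
    rw [Finset.disjoint_left] at hnd
    push_neg at hnd
    obtain ⟨g, hg1, hg2⟩ := hnd
    apply hQR
    apply Finset.coe_injective
    rw [hsmulcoe, hsmulcoe]
    apply hkey a ha a' ha'
    refine ⟨g, ?_, ?_⟩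
    · rw [← hsmulcoe]; exact hg1
    · rw [← hsmulcoe]; exact hg2
  have hbiU : (Set.toFinite ((A : Set G) * (B : Set G))).toFinset = P.biUnion id := by
    ext g
    simp only [Set.Finite.mem_toFinset, Finset.mem_biUnion, id]
    constructor
    · intro hg
      rw [hT] at hg
      simp only [Set.mem_iUnion, SetLike.mem_coe] at hg
      obtain ⟨a, ha, hg⟩ := hg
      refine ⟨a • Sf, ?_, ?_⟩
      · simp only [hP, Finset.mem_image, Set.Finite.mem_toFinset, SetLike.mem_coe]
        exact ⟨a, ha, rfl⟩
      · rw [← Finset.mem_coe, hsmulcoe]; exact hg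
    · rintro ⟨Q, hQ, hgQ⟩
      obtain ⟨a, ha, rfl⟩ := hmemP Q hQ
      rw [hT]
      simp only [Set.mem_iUnion, SetLike.mem_coe]
      refine ⟨a, ha, ?_⟩
      rw [← Finset.mem_coe, hsmulcoe] at hgQ
      exact hgQ
  have hcardT : ((A : Set G) * (B : Set G)).ncard = P.card * Sf.card := by
    rw [Set.ncard_eq_toFinset_card _ (Set.toFinite _), hbiU, Finset.card_biUnion hdisj]
    rw [Finset.sum_congr rfl (fun Q hQ => ?_), Finset.sum_const, smul_eq_mul]
    obtain ⟨a, _, rfl⟩ := hmemP Q hQ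
    exact Finset.card_smul_finset a Sf
  have hcardS : S.ncard = Sf.card := Set.ncard_eq_toFinset_card _ (Set.toFinite S)
  rw [hcardT, hcardS]
  exact Dvd.intro_left _ rfl
end
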